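/- Let X be a Banach space and let (A_m)_{m∈ℤ} be a sequence of bounded linear operators on X admitting an exponential dichotomy with constants C, λ > 0. Let f_n : X → X (n ∈ ℤ) satisfy ‖f_n(x) − f_n(y)‖ ≤ c‖x − y‖ for all n, x, y, where 0 < c < (1−e^{−λ})/(2C(1+e^{−λ})); set F_n = A_n + f_n. If (x¹_n)_{n∈ℤ} and (x²_n)_{n∈ℤ} both satisfy x_{n+1} = F_n(x_n) for all n ∈ ℤ and sup_{n∈ℤ} ‖x¹_n − x²_n‖ < ∞, then x¹_n = x²_n for all n ∈ ℤ. -/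

import Mathlib

/-- The forward products `𝒜(m,n) = A_{m-1} ⋯ A_n` (equal to the identity when `m ≤ n`). -/
noncomputable def calA {X : Type*} [NormedAddCommGroup X] [NormedSpace ℝ X]
    (A : ℤ → X →L[ℝ] X) (m n : ℤ) : X →L[ℝ] X :=
  (List.range (m - n).toNat).foldl (fun B k => (A (n + (k : ℤ))).comp B)
    (ContinuousLinearMap.id ℝ X)

/-- The sequence `(A_m)_{m ∈ ℤ}` admits an exponential dichotomy with constants `C, lam > 0`.
For `m ≤ n`, the operator `𝒜(m,n)` (the inverse of `𝒜(n,m)` restricted to `Ker P_m`)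
is described implicitly: `w = 𝒜(m,n)(Id - P_n) x` iff `w ∈ Ker P_m` and
`𝒜(n,m) w = x - P_n x`. -/
def ExpDichotomy {X : Type*} [NormedAddCommGroup X] [NormedSpace ℝ X]
    (A : ℤ → X →L[ℝ] X) (C lam : ℝ) : Prop :=
  ∃ P : ℤ → X →L[ℝ] X,
    (∀ m, (P m).comp (P m) = P m) ∧
    (∀ m, (P (m + 1)).comp (A m) = (A m).comp (P m)) ∧
    (∀ m, Set.BijOn (A m) (LinearMap.ker (P m : X →ₗ[ℝ] X) : Set X)
      (LinearMap.ker (P (m + 1) : X →ₗ[ℝ] X) : Set X)) ∧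
    (∀ m n : ℤ, n ≤ m → ‖(calA A m n).comp (P n)‖ ≤ C * Real.exp (-lam * (m - n))) ∧
    (∀ m n : ℤ, m ≤ n → ∀ x w : X, w ∈ LinearMap.ker (P m : X →ₗ[ℝ] X) →
      calA A n m w = x - P n x → ‖w‖ ≤ C * Real.exp (-lam * (n - m)) * ‖x‖)

/-!
Put `z = x₁ - x₂`. It solves the linear equation `z_{n+1} = A_n z_n + g_n` with forcing
`g_n = f_n(x₁ n) - f_n(x₂ n)`, and `‖g_n‖ ≤ c M` where `M = sup ‖z_n‖`. Applying the
variation-of-constants formula to the stable part `P_n z_n` forwards from `n - N`, and to the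
unstable part `(Id - P_n) z_n` backwards from `n + N` (inverting `𝒜` on `Ker P`), and letting
`N → ∞`, bounds both parts by geometric series: with `r = e^{-λ}`,
`‖z_n‖ ≤ C c M (1 + r) / (1 - r)`. The smallness of `c` makes this factor less than `1`,
so `M = 0`.
-/

open Finset

section Cocycle

variable {X : Type*} [NormedAddCommGroup X] [NormedSpace ℝ X] (A : ℤ → X →L[ℝ] X)

theorem calA_of_le {m n : ℤ} (h : m ≤ n) : calA A m n = ContinuousLinearMap.id ℝ X := by
  rw [calA, Int.toNat_of_nonpos (by omega)]
  rfl

theorem calA_self (n : ℤ) : calA A n n = ContinuousLinearMap.id ℝ X :=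
  calA_of_le A le_rfl

theorem calA_succ {m n : ℤ} (h : n ≤ m) : calA A (m + 1) n = (A m).comp (calA A m n) := by
  have hlen : (m + 1 - n).toNat = (m - n).toNat + 1 := by omega
  have hlast : n + max (m - n) 0 = m := by omega
  unfold calA
  rw [hlen, List.range_succ]
  simp [hlast]

theorem calA_comp_apply {m k n : ℤ} (hnk : n ≤ k) (hkm : k ≤ m) (x : X) :
    calA A m k (calA A k n x) = calA A m n x := by
  induction m, hkm using Int.leInduction with
  | base => simp [calA_self]
  | succ m hkm ih => simp [calA_succ A hkm, calA_succ A (hnk.trans hkm), ih]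

theorem calA_proj_apply (P : ℤ → X →L[ℝ] X)
    (hcomm : ∀ m, (P (m + 1)).comp (A m) = (A m).comp (P m)) {m n : ℤ} (h : n ≤ m) (x : X) :
    P m (calA A m n x) = calA A m n (P n x) := by
  induction m, h using Int.leInduction with
  | base => simp [calA_self]
  | succ m hnm ih =>
    rw [calA_succ A hnm, ContinuousLinearMap.comp_apply, ContinuousLinearMap.comp_apply, ← ih]
    exact DFunLike.congr_fun (hcomm m) _

theorem calA_surjOn_ker (P : ℤ → X →L[ℝ] X)
    (hbij : ∀ m, Set.BijOn (A m) (LinearMap.ker (P m : X →ₗ[ℝ] X) : Set X)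
      (LinearMap.ker (P (m + 1) : X →ₗ[ℝ] X) : Set X))
    {m n : ℤ} (h : n ≤ m) :
    Set.SurjOn (calA A m n) (LinearMap.ker (P n : X →ₗ[ℝ] X) : Set X)
      (LinearMap.ker (P m : X →ₗ[ℝ] X) : Set X) := by
  induction m, h using Int.leInduction with
  | base => simpa [calA_self] using Set.surjOn_id _
  | succ m hnm ih =>
    rw [calA_succ A hnm, ContinuousLinearMap.coe_comp]
    exact (hbij m).surjOn.comp ih

theorem solution_eq_calA_add_sum {z g : ℤ → X} (hz : ∀ n, z (n + 1) = A n (z n) + g n)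
    (n : ℤ) (N : ℕ) :
    z (n + N) = calA A (n + N) n (z n)
      + ∑ k ∈ range N, calA A (n + N) (n + k + 1) (g (n + k)) := by
  induction N with
  | zero => simp [calA_self]
  | succ N ih =>
    have hsucc : n + ((N + 1 : ℕ) : ℤ) = n + N + 1 := by push_cast; ring
    have hterm : ∀ k ∈ range N, calA A (n + N + 1) (n + k + 1) (g (n + k))
        = A (n + N) (calA A (n + N) (n + k + 1) (g (n + k))) := fun k hk => by
      rw [calA_succ A (by simp only [mem_range] at hk; omega)]
      rfl
    rw [hsucc, hz, ih, sum_range_succ, sum_congr rfl hterm, calA_succ A (by omega), calA_self]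
    simp only [map_add, map_sum, ContinuousLinearMap.comp_apply, ContinuousLinearMap.id_apply]
    abel

theorem proj_solution (P : ℤ → X →L[ℝ] X)
    (hcomm : ∀ m, (P (m + 1)).comp (A m) = (A m).comp (P m))
    {z g : ℤ → X} (hz : ∀ n, z (n + 1) = A n (z n) + g n) (n : ℤ) :
    P (n + 1) (z (n + 1)) = A n (P n (z n)) + P (n + 1) (g n) := by
  rw [hz, map_add, ← ContinuousLinearMap.comp_apply, hcomm, ContinuousLinearMap.comp_apply]

end Cocycle

theorem le_of_forall_le_add_mul_pow {a b K r : ℝ} (h0 : 0 ≤ r) (h1 : r < 1)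
    (h : ∀ N : ℕ, a ≤ b + K * r ^ N) : a ≤ b := by
  have hlim := ((tendsto_pow_atTop_nhds_zero_of_lt_one h0 h1).const_mul K).const_add b
  rw [mul_zero, add_zero] at hlim
  exact ge_of_tendsto' hlim h

theorem geom_sum_range_le_inv {r : ℝ} (h0 : 0 ≤ r) (h1 : r < 1) (N : ℕ) :
    ∑ k ∈ range N, r ^ k ≤ (1 - r)⁻¹ := by
  simpa [← range_eq_Ico] using geom_sum_Ico_le_of_lt_one (m := 0) (n := N) h0 h1

theorem exp_neg_mul_sub_eq_pow (lam : ℝ) {m n : ℤ} {N : ℕ} (h : m - n = N) :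
    Real.exp (-lam * (m - n)) = Real.exp (-lam) ^ N := by
  rw [← Int.cast_sub, h, Int.cast_natCast, ← Real.exp_nat_mul]
  ring_nf

section Dichotomy

variable {X : Type*} [NormedAddCommGroup X] [NormedSpace ℝ X] {A P : ℤ → X →L[ℝ] X}
  {C lam : ℝ}

theorem norm_calA_proj_apply_le
    (hstab : ∀ m n : ℤ, n ≤ m →
      ‖(calA A m n).comp (P n)‖ ≤ C * Real.exp (-lam * (m - n)))
    {m n : ℤ} {N : ℕ} (h : m - n = N) (u : X) :
    ‖calA A m n (P n u)‖ ≤ C * Real.exp (-lam) ^ N * ‖u‖ := by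
  rw [← exp_neg_mul_sub_eq_pow lam h]
  exact ((calA A m n).comp (P n)).le_of_opNorm_le (hstab m n (by omega)) u

theorem exists_ker_preimage_norm_le (hPP : ∀ m, (P m).comp (P m) = P m)
    (hbij : ∀ m, Set.BijOn (A m) (LinearMap.ker (P m : X →ₗ[ℝ] X) : Set X)
      (LinearMap.ker (P (m + 1) : X →ₗ[ℝ] X) : Set X))
    (hunst : ∀ m n : ℤ, m ≤ n → ∀ x w : X, w ∈ LinearMap.ker (P m : X →ₗ[ℝ] X) →
      calA A n m w = x - P n x → ‖w‖ ≤ C * Real.exp (-lam * (n - m)) * ‖x‖)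
    {m n : ℤ} {N : ℕ} (h : m - n = N) (x : X) :
    ∃ w, P n w = 0 ∧ calA A m n w = x - P m x ∧
      ‖w‖ ≤ C * Real.exp (-lam) ^ N * ‖x‖ := by
  have hker : x - P m x ∈ (LinearMap.ker (P m : X →ₗ[ℝ] X) : Set X) := by
    have hidem : P m (P m x) = P m x := DFunLike.congr_fun (hPP m) x
    simp [hidem]
  obtain ⟨w, hw, hmap⟩ := calA_surjOn_ker A P hbij (show n ≤ m by omega) hker
  refine ⟨w, hw, hmap, ?_⟩
  rw [← exp_neg_mul_sub_eq_pow lam h]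
  exact hunst n m (by omega) x w hw hmap

theorem norm_proj_le_of_solution (hC : 0 ≤ C) (hlam : 0 < lam)
    (hcomm : ∀ m, (P (m + 1)).comp (A m) = (A m).comp (P m))
    (hstab : ∀ m n : ℤ, n ≤ m →
      ‖(calA A m n).comp (P n)‖ ≤ C * Real.exp (-lam * (m - n)))
    {z g : ℤ → X} (hz : ∀ n, z (n + 1) = A n (z n) + g n) {M K : ℝ}
    (hzM : ∀ n, ‖z n‖ ≤ M) (hgK : ∀ n, ‖g n‖ ≤ K) (n : ℤ) :
    ‖P n (z n)‖ ≤ C * K / (1 - Real.exp (-lam)) := by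
  set r := Real.exp (-lam)
  have hr0 : 0 < r := Real.exp_pos _
  have hr1 : r < 1 := Real.exp_lt_one_iff.mpr (neg_neg_of_pos hlam)
  have hK : 0 ≤ K := (norm_nonneg _).trans (hgK 0)
  refine le_of_forall_le_add_mul_pow hr0.le hr1 (K := C * M) fun N => ?_
  obtain ⟨j, rfl⟩ : ∃ j : ℤ, n = j + N := ⟨n - N, by ring⟩
  have hgeom : ∑ k ∈ range N, r ^ (N - 1 - k) ≤ (1 - r)⁻¹ := by
    rw [Finset.sum_range_reflect (r ^ ·) N]
    exact geom_sum_range_le_inv hr0.le hr1 N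
  rw [solution_eq_calA_add_sum A (z := fun m => P m (z m)) (proj_solution A P hcomm hz) j N]
  calc _ ≤ ‖calA A (j + N) j (P j (z j))‖
          + ∑ k ∈ range N, ‖calA A (j + N) (j + k + 1) (P (j + k + 1) (g (j + k)))‖ :=
        (norm_add_le _ _).trans (add_le_add_right (norm_sum_le _ _) _)
    _ ≤ C * r ^ N * M + ∑ k ∈ range N, C * r ^ (N - 1 - k) * K := by
        gcongr with k hk
        · exact (norm_calA_proj_apply_le hstab (by omega) _).trans
            (mul_le_mul_of_nonneg_left (hzM j) (mul_nonneg hC (pow_nonneg hr0.le N)))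
        · rw [mem_range] at hk
          exact (norm_calA_proj_apply_le hstab (by omega) _).trans
            (mul_le_mul_of_nonneg_left (hgK _) (mul_nonneg hC (pow_nonneg hr0.le _)))
    _ = C * K * ∑ k ∈ range N, r ^ (N - 1 - k) + C * M * r ^ N := by
        rw [mul_sum, add_comm]
        congr 1
        · exact sum_congr rfl fun _ _ => by ring
        · ring
    _ ≤ C * K * (1 - r)⁻¹ + C * M * r ^ N := by gcongr
    _ = C * K / (1 - r) + C * M * r ^ N := by ring

theorem norm_sub_proj_le_of_solution (hC : 0 ≤ C) (hlam : 0 < lam)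
    (hPP : ∀ m, (P m).comp (P m) = P m)
    (hcomm : ∀ m, (P (m + 1)).comp (A m) = (A m).comp (P m))
    (hbij : ∀ m, Set.BijOn (A m) (LinearMap.ker (P m : X →ₗ[ℝ] X) : Set X)
      (LinearMap.ker (P (m + 1) : X →ₗ[ℝ] X) : Set X))
    (hunst : ∀ m n : ℤ, m ≤ n → ∀ x w : X, w ∈ LinearMap.ker (P m : X →ₗ[ℝ] X) →
      calA A n m w = x - P n x → ‖w‖ ≤ C * Real.exp (-lam * (n - m)) * ‖x‖)
    {z g : ℤ → X} (hz : ∀ n, z (n + 1) = A n (z n) + g n) {M K : ℝ}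
    (hzM : ∀ n, ‖z n‖ ≤ M) (hgK : ∀ n, ‖g n‖ ≤ K) (n : ℤ) :
    ‖z n - P n (z n)‖ ≤ C * K * Real.exp (-lam) / (1 - Real.exp (-lam)) := by
  set r := Real.exp (-lam)
  have hr0 : 0 < r := Real.exp_pos _
  have hr1 : r < 1 := Real.exp_lt_one_iff.mpr (neg_neg_of_pos hlam)
  have hK : 0 ≤ K := (norm_nonneg _).trans (hgK 0)
  have hidem : ∀ m x, P m (P m x) = P m x := fun m x => DFunLike.congr_fun (hPP m) x
  have hu : ∀ n, z (n + 1) - P (n + 1) (z (n + 1))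
      = A n (z n - P n (z n)) + (g n - P (n + 1) (g n)) := fun n => by
    rw [proj_solution A P hcomm hz, hz, map_sub]
    abel
  refine le_of_forall_le_add_mul_pow hr0.le hr1 (K := C * M) fun N => ?_
  -- pull each forcing term back to `Ker P n`, where `𝒜` is invertible
  choose w hwker hwmap hwnorm using fun k : ℕ => exists_ker_preimage_norm_le hPP hbij hunst
    (m := n + k + 1) (n := n) (N := k + 1) (by push_cast; ring) (g (n + k))
  set S := ∑ k ∈ range N, w k
  have hshift : calA A (n + N) n (z n - P n (z n) + S) = z (n + N) - P (n + N) (z (n + N)) := by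
    rw [solution_eq_calA_add_sum A (z := fun m => z m - P m (z m)) hu n N, map_add, map_sum]
    refine congrArg _ (sum_congr rfl fun k hk => ?_)
    rw [mem_range] at hk
    rw [← hwmap k, calA_comp_apply A (by omega) (by omega)]
  have hker : P n (z n - P n (z n) + S) = 0 := by
    simp [S, map_sum, hwker, hidem]
  have hfar : ‖z n - P n (z n) + S‖ ≤ C * r ^ N * M := by
    calc _ ≤ C * Real.exp (-lam * ((n + N : ℤ) - n)) * ‖z (n + N)‖ :=
          hunst n (n + N) (by omega) _ _ hker hshift
      _ = C * r ^ N * ‖z (n + N)‖ := by rw [exp_neg_mul_sub_eq_pow lam (N := N) (by omega)]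
      _ ≤ C * r ^ N * M :=
          mul_le_mul_of_nonneg_left (hzM _) (mul_nonneg hC (pow_nonneg hr0.le N))
  have hS : ‖S‖ ≤ C * K * r / (1 - r) := by
    calc ‖S‖ ≤ ∑ k ∈ range N, ‖w k‖ := norm_sum_le _ _
      _ ≤ ∑ k ∈ range N, C * K * r * r ^ k := sum_le_sum fun k _ => (hwnorm k).trans <|
          (mul_le_mul_of_nonneg_left (hgK _) (mul_nonneg hC (pow_nonneg hr0.le _))).trans_eq
            (by ring)
      _ = C * K * r * ∑ k ∈ range N, r ^ k := (mul_sum _ _ _).symm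
      _ ≤ C * K * r * (1 - r)⁻¹ := by gcongr; exact geom_sum_range_le_inv hr0.le hr1 N
      _ = C * K * r / (1 - r) := by ring
  calc ‖z n - P n (z n)‖ = ‖(z n - P n (z n) + S) - S‖ := by rw [add_sub_cancel_right]
    _ ≤ C * r ^ N * M + C * K * r / (1 - r) := (norm_sub_le _ _).trans (add_le_add hfar hS)
    _ = C * K * r / (1 - r) + C * M * r ^ N := by ring

theorem ExpDichotomy.norm_le_of_solution (h : ExpDichotomy A C lam)
    (hC : 0 ≤ C) (hlam : 0 < lam)
    {z g : ℤ → X} (hz : ∀ n, z (n + 1) = A n (z n) + g n) {M K : ℝ}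
    (hzM : ∀ n, ‖z n‖ ≤ M) (hgK : ∀ n, ‖g n‖ ≤ K) (n : ℤ) :
    ‖z n‖ ≤ C * K * (1 + Real.exp (-lam)) / (1 - Real.exp (-lam)) := by
  obtain ⟨P, hPP, hcomm, hbij, hstab, hunst⟩ := h
  calc ‖z n‖ = ‖P n (z n) + (z n - P n (z n))‖ := by rw [add_sub_cancel]
    _ ≤ C * K / (1 - Real.exp (-lam)) + C * K * Real.exp (-lam) / (1 - Real.exp (-lam)) :=
        (norm_add_le _ _).trans (add_le_add
          (norm_proj_le_of_solution hC hlam hcomm hstab hz hzM hgK n)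
          (norm_sub_proj_le_of_solution hC hlam hPP hcomm hbij hunst hz hzM hgK n))
    _ = C * K * (1 + Real.exp (-lam)) / (1 - Real.exp (-lam)) := by ring

end Dichotomy

theorem dichotomy_bounded_trajectories_coincide_general
    {X : Type*} [NormedAddCommGroup X] [NormedSpace ℝ X]
    (A : ℤ → X →L[ℝ] X) (C lam : ℝ) (hC : 0 < C) (hlam : 0 < lam)
    (h : ExpDichotomy A C lam)
    (f : ℤ → X → X) (c : ℝ) (hc : 0 < c)
    (hcsmall : c < (1 - Real.exp (-lam)) / (2 * C * (1 + Real.exp (-lam))))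
    (hf : ∀ n : ℤ, ∀ x y : X, ‖f n x - f n y‖ ≤ c * ‖x - y‖)
    (x₁ x₂ : ℤ → X)
    (hx₁ : ∀ n : ℤ, x₁ (n + 1) = A n (x₁ n) + f n (x₁ n))
    (hx₂ : ∀ n : ℤ, x₂ (n + 1) = A n (x₂ n) + f n (x₂ n))
    (hbdd : BddAbove (Set.range fun n => ‖x₁ n - x₂ n‖)) :
    ∀ n : ℤ, x₁ n = x₂ n := by
  set M := ⨆ n, ‖x₁ n - x₂ n‖
  set r := Real.exp (-lam)
  have hzM : ∀ n, ‖x₁ n - x₂ n‖ ≤ M := le_ciSup hbdd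
  have hz : ∀ n, x₁ (n + 1) - x₂ (n + 1)
      = A n (x₁ n - x₂ n) + (f n (x₁ n) - f n (x₂ n)) := fun n => by
    rw [hx₁, hx₂, map_sub]
    abel
  have hgK : ∀ n, ‖f n (x₁ n) - f n (x₂ n)‖ ≤ c * M := fun n =>
    (hf n _ _).trans (mul_le_mul_of_nonneg_left (hzM n) hc.le)
  have hMle : M ≤ C * (c * M) * (1 + r) / (1 - r) :=
    ciSup_le (h.norm_le_of_solution hC.le hlam (z := fun n => x₁ n - x₂ n) hz hzM hgK)
  have hr1 : r < 1 := Real.exp_lt_one_iff.mpr (neg_neg_of_pos hlam)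
  have hcC : c * (2 * C * (1 + r)) < 1 - r :=
    (lt_div_iff₀ (by positivity)).mp hcsmall
  have hM0 : M ≤ 0 := by
    rw [le_div_iff₀ (by linarith)] at hMle
    nlinarith [(norm_nonneg _).trans (hzM 0)]
  exact fun n => sub_eq_zero.mp (norm_le_zero_iff.mp ((hzM n).trans hM0))

/-- If `(A_m)_{m∈ℤ}` admits an exponential dichotomy with constants `C, lam > 0` and the `f_n`
are `c`-Lipschitz with `0 < c < (1-e^{-lam})/(2C(1+e^{-lam}))`, then two trajectories of
`x_{n+1} = A_n x_n + f_n(x_n)` which stay at bounded distance from each other coincide. -/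
theorem dichotomy_bounded_trajectories_coincide
    {X : Type*} [NormedAddCommGroup X] [NormedSpace ℝ X] [CompleteSpace X]
    (A : ℤ → X →L[ℝ] X) (C lam : ℝ) (hC : 0 < C) (hlam : 0 < lam)
    (h : ExpDichotomy A C lam)
    (f : ℤ → X → X) (c : ℝ) (hc : 0 < c)
    (hcsmall : c < (1 - Real.exp (-lam)) / (2 * C * (1 + Real.exp (-lam))))
    (hf : ∀ n : ℤ, ∀ x y : X, ‖f n x - f n y‖ ≤ c * ‖x - y‖)
    (x₁ x₂ : ℤ → X)
    (hx₁ : ∀ n : ℤ, x₁ (n + 1) = A n (x₁ n) + f n (x₁ n))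
    (hx₂ : ∀ n : ℤ, x₂ (n + 1) = A n (x₂ n) + f n (x₂ n))
    (hbdd : BddAbove (Set.range fun n => ‖x₁ n - x₂ n‖)) :
    ∀ n : ℤ, x₁ n = x₂ n :=
  dichotomy_bounded_trajectories_coincide_general A C lam hC hlam h f c hc hcsmall hf x₁ x₂ hx₁ hx₂
    hbdd
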